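/- The partial transposition ρ_insep^{T₂} of the state ρ_insep on ℂ³ ⊗ ℂ³ is not positive semidefinite: there is a vector v (one may take v = e₁⊗e₃ − ((1+√5)/2) e₃⊗e₁) with ⟨v, ρ_insep^{T₂} v⟩ < 0. Consequently ρ_insep is not separable. -/

import Mathlib

open scoped ComplexOrder
open Matrix Kronecker

noncomputable section

/-- A quantum state: a positive semidefinite complex matrix of trace 1. -/
def IsState {n : Type*} [Fintype n] [DecidableEq n] (ρ : Matrix n n ℂ) : Prop :=
  ρ.PosSemidef ∧ ρ.trace = 1

/-- Separability: membership in the closure of the convex hull of Kronecker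
products of states. -/
def IsSepState {m₁ m₂ : ℕ}
    (ρ : Matrix (Fin m₁ × Fin m₂) (Fin m₁ × Fin m₂) ℂ) : Prop :=
  ρ ∈ closure (convexHull ℝ
    {σ : Matrix (Fin m₁ × Fin m₂) (Fin m₁ × Fin m₂) ℂ |
      ∃ (A : Matrix (Fin m₁) (Fin m₁) ℂ) (B : Matrix (Fin m₂) (Fin m₂) ℂ),
        IsState A ∧ IsState B ∧ σ = A ⊗ₖ B})

/-- The rank-one operator `|ψ⟩⟨ψ|` (orthogonal projection on `span ψ` for unit `ψ`). -/
def proj {n : Type*} (ψ : n → ℂ) : Matrix n n ℂ :=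
  fun i j => ψ i * star (ψ j)

/-- The tensor (Kronecker) product of two vectors. -/
def tens {m₁ m₂ : ℕ} (ψ : Fin m₁ → ℂ) (φ : Fin m₂ → ℂ) :
    Fin m₁ × Fin m₂ → ℂ := fun p => ψ p.1 * φ p.2

/-- Partial transposition on the second factor. -/
def pt₂ {m₁ m₂ : ℕ} (ρ : Matrix (Fin m₁ × Fin m₂) (Fin m₁ × Fin m₂) ℂ) :
    Matrix (Fin m₁ × Fin m₂) (Fin m₁ × Fin m₂) ℂ :=
  fun p q => ρ (p.1, q.2) (q.1, p.2)

/-- Standard basis vectors of `ℂ^n`. -/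
def e (n : ℕ) (i : Fin n) : Fin n → ℂ := fun j => if j = i then 1 else 0

/-- The maximally entangled vector `Ψ = (e₁⊗e₁ + e₂⊗e₂ + e₃⊗e₃)/√3`. -/
def Ψ3 : Fin 3 × Fin 3 → ℂ :=
  (Real.sqrt 3 : ℂ)⁻¹ •
    (tens (e 3 0) (e 3 0) + tens (e 3 1) (e 3 1) + tens (e 3 2) (e 3 2))

/-- The projector `Q = I⊗I − (Σ_i P_{e_i⊗e_i} + P_{e₃⊗e₁})`. -/
def Q3 : Matrix (Fin 3 × Fin 3) (Fin 3 × Fin 3) ℂ :=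
  1 - (∑ i : Fin 3, proj (tens (e 3 i) (e 3 i)) + proj (tens (e 3 2) (e 3 0)))

/-- The inseparable state `ρ_insep = (3/8) P_Ψ + (1/8) Q`. -/
def ρinsep : Matrix (Fin 3 × Fin 3) (Fin 3 × Fin 3) ℂ :=
  (3 / 8 : ℂ) • proj Ψ3 + (1 / 8 : ℂ) • Q3

/-- The product vector `Φ_a = e₃ ⊗ (√((1+a)/2) e₁ + √((1−a)/2) e₃)`. -/
def Φa (a : ℝ) : Fin 3 × Fin 3 → ℂ :=
  tens (e 3 2) (fun j =>
    if j = 0 then (Real.sqrt ((1 + a) / 2) : ℂ)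
    else if j = 2 then (Real.sqrt ((1 - a) / 2) : ℂ) else 0)

/-- The Horodecki state `ρ_a = (8a/(8a+1)) ρ_insep + (1/(8a+1)) P_{Φ_a}`. -/
def ρA (a : ℝ) : Matrix (Fin 3 × Fin 3) (Fin 3 × Fin 3) ℂ :=
  ((8 * a / (8 * a + 1) : ℝ) : ℂ) • ρinsep +
    ((1 / (8 * a + 1) : ℝ) : ℂ) • proj (Φa a)

/-! Peres' criterion: partial transposition sends a product state `A ⊗ B` to `A ⊗ Bᵀ`, which is
again positive semidefinite, and it is linear and continuous, so the partial transpose of every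
separable state is positive semidefinite. On `span {e₁⊗e₃, e₃⊗e₁}` the matrix `ρ_insep^{T₂}` is
`(1/8) [[1, 1], [1, 0]]`, whose eigenvector `(1, -φ)` (`φ` the golden ratio) has eigenvalue
`-1/φ < 0`. -/

theorem Matrix.isClosed_setOf_posSemidef {𝕜 n : Type*} [RCLike 𝕜] [Fintype n] :
    IsClosed {M : Matrix n n 𝕜 | M.PosSemidef} := by
  have h : {M : Matrix n n 𝕜 | M.PosSemidef} =
      {M | Mᴴ = M} ∩ ⋂ x : n → 𝕜, {M | 0 ≤ star x ⬝ᵥ M *ᵥ x} := by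
    ext M
    simp [posSemidef_iff_dotProduct_mulVec, IsHermitian]
  rw [h]
  exact (isClosed_eq continuous_id.matrix_conjTranspose continuous_id).inter <|
    isClosed_iInter fun x => isClosed_le continuous_const <|
      continuous_const.dotProduct (continuous_id.matrix_mulVec continuous_const)

section PartialTranspose

variable {m₁ m₂ : ℕ}

theorem pt₂_kronecker (A : Matrix (Fin m₁) (Fin m₁) ℂ) (B : Matrix (Fin m₂) (Fin m₂) ℂ) :
    pt₂ (A ⊗ₖ B) = A ⊗ₖ Bᵀ :=
  rfl

theorem pt₂_add (ρ σ : Matrix (Fin m₁ × Fin m₂) (Fin m₁ × Fin m₂) ℂ) :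
    pt₂ (ρ + σ) = pt₂ ρ + pt₂ σ :=
  rfl

theorem pt₂_smul (a : ℝ) (ρ : Matrix (Fin m₁ × Fin m₂) (Fin m₁ × Fin m₂) ℂ) :
    pt₂ (a • ρ) = a • pt₂ ρ :=
  rfl

theorem continuous_pt₂ :
    Continuous (pt₂ : Matrix (Fin m₁ × Fin m₂) (Fin m₁ × Fin m₂) ℂ → _) :=
  continuous_pi fun p => continuous_pi fun q => continuous_id.matrix_elem (p.1, q.2) (q.1, p.2)

theorem IsSepState.posSemidef_pt₂ {ρ : Matrix (Fin m₁ × Fin m₂) (Fin m₁ × Fin m₂) ℂ}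
    (hρ : IsSepState ρ) : (pt₂ ρ).PosSemidef := by
  refine closure_minimal (convexHull_min ?products ?convex)
    (isClosed_setOf_posSemidef.preimage continuous_pt₂) hρ
  case products =>
    rintro _ ⟨A, B, hA, hB, rfl⟩
    exact hA.1.kronecker hB.1.transpose
  case convex =>
    intro ρ hρ σ hσ a b ha hb _
    simp only [Set.mem_preimage, Set.mem_ofPred_eq, pt₂_add, pt₂_smul] at hρ hσ ⊢
    exact (hρ.smul ha).add (hσ.smul hb)

end PartialTranspose

theorem tens_e_eq_single {m₁ m₂ : ℕ} (i : Fin m₁) (j : Fin m₂) :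
    tens (e m₁ i) (e m₂ j) = Pi.single (i, j) 1 := by
  ext ⟨k, l⟩
  simp only [tens, e, Pi.single_apply, Prod.ext_iff, ite_and, ite_mul, one_mul, zero_mul]

theorem star_single_sub_smul_single_dotProduct_mulVec {ι : Type*} [Fintype ι] [DecidableEq ι]
    (M : Matrix ι ι ℂ) (p q : ι) (t : ℝ) :
    star (Pi.single p 1 - (t : ℂ) • Pi.single q 1) ⬝ᵥ M *ᵥ (Pi.single p 1 - (t : ℂ) • Pi.single q 1)
      = M p p - t * (M p q + M q p) + t ^ 2 * M q q := by
  simp only [star_sub, star_smul, Complex.star_def, Complex.conj_ofReal, Pi.star_single, star_one,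
    mulVec_sub, mulVec_smul, mulVec_single_one, sub_dotProduct, dotProduct_sub, smul_dotProduct,
    dotProduct_smul, single_one_dotProduct, smul_eq_mul, col_apply]
  ring

theorem star_dotProduct_pt₂_ρinsep_mulVec (t : ℝ) :
    star (tens (e 3 0) (e 3 2) - (t : ℂ) • tens (e 3 2) (e 3 0)) ⬝ᵥ
        (pt₂ ρinsep).mulVec (tens (e 3 0) (e 3 2) - (t : ℂ) • tens (e 3 2) (e 3 0))
      = ((1 - 2 * t) / 8 : ℝ) := by
  rw [tens_e_eq_single, tens_e_eq_single, star_single_sub_smul_single_dotProduct_mulVec]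
  have hsqrt3 : ((Real.sqrt 3 : ℝ) : ℂ)⁻¹ * ((Real.sqrt 3 : ℝ) : ℂ)⁻¹ = 1 / 3 := by
    rw [← mul_inv, ← Complex.ofReal_mul, Real.mul_self_sqrt (by norm_num)]
    norm_num
  have h₁ : pt₂ ρinsep (0, 2) (0, 2) = 1 / 8 := by
    simp [pt₂, ρinsep, proj, Q3, Ψ3, tens, e, Fin.sum_univ_three, one_apply]
  have h₂ : pt₂ ρinsep (0, 2) (2, 0) = 1 / 8 := by
    simp [pt₂, ρinsep, proj, Q3, Ψ3, tens, e, Fin.sum_univ_three, one_apply, hsqrt3]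
    norm_num
  have h₃ : pt₂ ρinsep (2, 0) (0, 2) = 1 / 8 := by
    simp [pt₂, ρinsep, proj, Q3, Ψ3, tens, e, Fin.sum_univ_three, one_apply, hsqrt3]
    norm_num
  have h₄ : pt₂ ρinsep (2, 0) (2, 0) = 0 := by
    simp [pt₂, ρinsep, proj, Q3, Ψ3, tens, e, Fin.sum_univ_three, one_apply]
  rw [h₁, h₂, h₃, h₄]
  push_cast
  ring

/-- The partial transposition of `ρ_insep` is not positive
semidefinite: the vector `v = e₁⊗e₃ − ((1+√5)/2) e₃⊗e₁` witnesses
`⟨v, ρ_insep^{T₂} v⟩ < 0`. Consequently `ρ_insep` is not separable. -/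
theorem ρinsep_pt₂_not_posSemidef :
    (star (tens (e 3 0) (e 3 2) - (((1 + Real.sqrt 5) / 2 : ℝ) : ℂ) • tens (e 3 2) (e 3 0)) ⬝ᵥ
        (pt₂ ρinsep).mulVec
          (tens (e 3 0) (e 3 2) - (((1 + Real.sqrt 5) / 2 : ℝ) : ℂ) • tens (e 3 2) (e 3 0))
      < 0) ∧
    ¬ (pt₂ ρinsep).PosSemidef ∧ ¬ IsSepState ρinsep := by
  have hgolden : (1 - 2 * ((1 + Real.sqrt 5) / 2)) / 8 < 0 := by
    have : 0 < Real.sqrt 5 := by positivity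
    linarith
  have hneg := (star_dotProduct_pt₂_ρinsep_mulVec ((1 + Real.sqrt 5) / 2)).trans_lt
    (by exact_mod_cast hgolden : (((1 - 2 * ((1 + Real.sqrt 5) / 2)) / 8 : ℝ) : ℂ) < 0)
  have hnot : ¬ (pt₂ ρinsep).PosSemidef := fun h => hneg.not_ge (h.dotProduct_mulVec_nonneg _)
  exact ⟨hneg, hnot, fun hsep => hnot hsep.posSemidef_pt₂⟩
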